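/- arXiv:1703.05265 — 4 statements merged into one kernel-verified Lean document; each statement's English description precedes it below -/
import Mathlib

section
/- Let (·,·): F* × F* → A be a bilinear Steinberg symbol, and let s, t in F* satisfy s·t·(1-s·t) ≠ 0. Then (1-st, t) = (1-st, t - s⁻¹). -/
/-!
With `x = 1 - s t` one has `t - s⁻¹ = t · (-x) · (1 - x)⁻¹`, so by bimultiplicativity the claim
reduces to `(x, 1 - x) = 1` and `(x, -x) = 1`. The latter is the classical consequence of the
Steinberg relation, from `-x = (1 - x) / (1 - x⁻¹)` and `(x, y⁻¹) = (x⁻¹, y)`.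
-/

namespace SteinbergSymbol

variable {F A : Type*} [Field F] [CommGroup A] {c : F → F → A}

theorem map_one_left
    (hmul_left : ∀ x y z : F, x ≠ 0 → y ≠ 0 → z ≠ 0 → c (x * y) z = c x z * c y z)
    {y : F} (hy : y ≠ 0) : c 1 y = 1 := by
  have h := hmul_left 1 1 y one_ne_zero one_ne_zero hy
  rwa [one_mul, left_eq_mul] at h

theorem map_one_right
    (hmul_right : ∀ x y z : F, x ≠ 0 → y ≠ 0 → z ≠ 0 → c x (y * z) = c x y * c x z)
    {x : F} (hx : x ≠ 0) : c x 1 = 1 := by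
  have h := hmul_right x 1 1 hx one_ne_zero one_ne_zero
  rwa [one_mul, left_eq_mul] at h

theorem map_inv_left
    (hmul_left : ∀ x y z : F, x ≠ 0 → y ≠ 0 → z ≠ 0 → c (x * y) z = c x z * c y z)
    {x y : F} (hx : x ≠ 0) (hy : y ≠ 0) : c x⁻¹ y = (c x y)⁻¹ := by
  have h := hmul_left x x⁻¹ y hx (inv_ne_zero hx) hy
  rw [mul_inv_cancel₀ hx, map_one_left hmul_left hy] at h
  exact eq_inv_of_mul_eq_one_right h.symm

theorem map_inv_right
    (hmul_right : ∀ x y z : F, x ≠ 0 → y ≠ 0 → z ≠ 0 → c x (y * z) = c x y * c x z)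
    {x y : F} (hx : x ≠ 0) (hy : y ≠ 0) : c x y⁻¹ = (c x y)⁻¹ := by
  have h := hmul_right x y y⁻¹ hx hy (inv_ne_zero hy)
  rw [mul_inv_cancel₀ hy, map_one_right hmul_right hx] at h
  exact eq_inv_of_mul_eq_one_right h.symm

theorem map_neg_self
    (hmul_right : ∀ x y z : F, x ≠ 0 → y ≠ 0 → z ≠ 0 → c x (y * z) = c x y * c x z)
    (hmul_left : ∀ x y z : F, x ≠ 0 → y ≠ 0 → z ≠ 0 → c (x * y) z = c x z * c y z)
    (hstein : ∀ x : F, x ≠ 0 → x ≠ 1 → c x (1 - x) = 1)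
    {x : F} (hx : x ≠ 0) (hx1 : x ≠ 1) : c x (-x) = 1 := by
  have hxinv1 : x⁻¹ ≠ 1 := inv_ne_one.mpr hx1
  have hsub : (1 : F) - x ≠ 0 := sub_ne_zero.mpr hx1.symm
  have hsubinv : (1 : F) - x⁻¹ ≠ 0 := sub_ne_zero.mpr hxinv1.symm
  have hneg : -x = (1 - x) * (1 - x⁻¹)⁻¹ := by
    field_simp
    ring
  calc c x (-x) = c x (1 - x) * (c x⁻¹ (1 - x⁻¹)) := by
        rw [hneg, hmul_right x _ _ hx hsub (inv_ne_zero hsubinv),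
          map_inv_right hmul_right hx hsubinv, map_inv_left hmul_left hx hsubinv]
    _ = 1 := by rw [hstein x hx hx1, hstein x⁻¹ (inv_ne_zero hx) hxinv1, one_mul]

end SteinbergSymbol

open SteinbergSymbol in
theorem steinberg_symbol_shift {F A : Type*} [Field F] [CommGroup A] (c : F → F → A)
    (hmul_right : ∀ x y z : F, x ≠ 0 → y ≠ 0 → z ≠ 0 → c x (y * z) = c x y * c x z)
    (hmul_left : ∀ x y z : F, x ≠ 0 → y ≠ 0 → z ≠ 0 → c (x * y) z = c x z * c y z)
    (hstein : ∀ x : F, x ≠ 0 → x ≠ 1 → c x (1 - x) = 1) :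
    ∀ s t : F, s * t * (1 - s * t) ≠ 0 → c (1 - s * t) t = c (1 - s * t) (t - s⁻¹) := by
  intro s t h
  obtain ⟨hst, hx⟩ := mul_ne_zero_iff.mp h
  obtain ⟨hs, ht⟩ := mul_ne_zero_iff.mp hst
  have hx1 : (1 : F) - s * t ≠ 1 := by simpa using hst
  have hshift : t - s⁻¹ = t * (-(1 - s * t) * (s * t)⁻¹) := by
    field_simp
    ring
  have hstein' : c (1 - s * t) (s * t) = 1 := by
    simpa using hstein (1 - s * t) hx hx1
  have hnegx : -(1 - s * t) ≠ 0 := neg_ne_zero.mpr hx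
  symm
  calc c (1 - s * t) (t - s⁻¹)
      = c (1 - s * t) t * (c (1 - s * t) (-(1 - s * t)) * (c (1 - s * t) (s * t))⁻¹) := by
        rw [hshift, hmul_right _ t _ hx ht (mul_ne_zero hnegx (inv_ne_zero hst)),
          hmul_right _ _ _ hx hnegx (inv_ne_zero hst), map_inv_right hmul_right hx hst]
    _ = c (1 - s * t) t := by
        rw [map_neg_self hmul_right hmul_left hstein hx hx1, hstein', inv_one, one_mul, mul_one]
end

section
/- Define polynomials f_k(X), g_k(X) in ℤ[X] by f₀(X)=1, g₀(X)=0, g_{k+1}(X) = f_k(X) - g_k(X), and f_{k+1}(X) = X·g_{k+1}(X) - f_k(X). Then for all k ≥ 1, g_k(X) = Σ_{i=0}^{k-1} (-1)^i · C(2k-1-i, i) · X^{k-1-i} and f_k(X) = Σ_{j=0}^{k} (-1)^j · C(2k-j, j) · X^{k-j}, where C(n,m) denotes the binomial coefficient. -/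
/-!
Both `g k` and `f k` are signed sums `∑ᵢ (-1)^i C(n-i, i) X^(m-i)` along a shallow diagonal of
Pascal's triangle (`n = 2k-1, m = k-1` for `g k`, `n = 2k, m = k` for `f k`). Read along the
interleaved sequence `f 0, g 1, f 1, g 2, …`, both recursions are instances of Pascal's rule
`C(n+2-i, i) = C(n+1-i, i) + C(n+1-i, i-1)`; multiplying by `X` merely raises the degree bound `m`,
because the extra top term carries a binomial coefficient that vanishes.
-/

open Polynomial Finset

theorem Nat.choose_sub_add_one_add_one (n i : ℕ) :
    (n + 1 - i).choose (i + 1) = (n - i).choose i + (n - i).choose (i + 1) := by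
  rcases le_or_gt i n with h | h
  · rw [Nat.sub_add_comm h, Nat.choose_succ_succ]
  · rw [Nat.sub_eq_zero_of_le h.le, Nat.choose_eq_zero_of_lt (by omega : n + 1 - i < i + 1),
      Nat.choose_eq_zero_of_lt (by omega : 0 < i), Nat.choose_eq_zero_of_lt (by omega : 0 < i + 1)]

noncomputable def diagonalChoosePoly (n m : ℕ) : ℤ[X] :=
  ∑ i ∈ range (m + 1), C ((-1 : ℤ) ^ i * ((n - i).choose i : ℤ)) * X ^ (m - i)

theorem diagonalChoosePoly_add_two (n m : ℕ) :
    diagonalChoosePoly (n + 2) (m + 1) =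
      diagonalChoosePoly (n + 1) (m + 1) - diagonalChoosePoly n m := by
  rw [eq_sub_iff_add_eq]
  simp only [diagonalChoosePoly, sum_range_succ' _ (m + 1)]
  simp only [Nat.sub_zero, Nat.choose_zero_right, pow_zero, Nat.add_sub_add_right,
    show n + 2 = n + 1 + 1 from rfl, Nat.choose_sub_add_one_add_one]
  rw [add_right_comm, ← sum_add_distrib]
  congr 1
  refine sum_congr rfl fun i _ => ?_
  push_cast
  simp only [map_mul, map_add, map_pow, map_neg, map_one, map_natCast]
  ring

theorem X_mul_diagonalChoosePoly {n m : ℕ} (h : n < 2 * (m + 1)) :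
    X * diagonalChoosePoly n m = diagonalChoosePoly n (m + 1) := by
  rw [diagonalChoosePoly, diagonalChoosePoly, sum_range_succ _ (m + 1), mul_sum,
    Nat.choose_eq_zero_of_lt (by omega : n - (m + 1) < m + 1)]
  simp only [Nat.cast_zero, mul_zero, map_zero, zero_mul, add_zero]
  refine sum_congr rfl fun i hi => ?_
  rw [Nat.sub_add_comm (Nat.lt_succ_iff.mp (mem_range.mp hi)), pow_succ]
  ring

theorem eq_diagonalChoosePoly_of_recursion (f g : ℕ → ℤ[X]) (hf0 : f 0 = 1) (hg0 : g 0 = 0)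
    (hg : ∀ k, g (k + 1) = f k - g k) (hf : ∀ k, f (k + 1) = X * g (k + 1) - f k) (k : ℕ) :
    g (k + 1) = diagonalChoosePoly (2 * k + 1) k ∧ f k = diagonalChoosePoly (2 * k) k := by
  induction k with
  | zero => simp [hg, hf0, hg0, diagonalChoosePoly]
  | succ k ih =>
    have hf_succ : f (k + 1) = diagonalChoosePoly (2 * (k + 1)) (k + 1) := by
      rw [hf, ih.1, ih.2, X_mul_diagonalChoosePoly (by omega)]
      exact (diagonalChoosePoly_add_two (2 * k) k).symm
    refine ⟨?_, hf_succ⟩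
    rw [hg, hf_succ, ih.1]
    exact (diagonalChoosePoly_add_two (2 * k + 1) k).symm

open Polynomial in
/-- Closed formulas for the polynomials `f_k, g_k ∈ ℤ[X]` defined by the recursion
`f₀ = 1`, `g₀ = 0`, `g_{k+1} = f_k - g_k`, `f_{k+1} = X·g_{k+1} - f_k`. -/
theorem fg_polynomials_closed_form (f g : ℕ → Polynomial ℤ)
    (hf0 : f 0 = 1) (hg0 : g 0 = 0)
    (hg : ∀ k, g (k + 1) = f k - g k)
    (hf : ∀ k, f (k + 1) = X * g (k + 1) - f k) :
    ∀ k : ℕ, 1 ≤ k →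
      g k = ∑ i ∈ Finset.range k,
          C ((-1 : ℤ) ^ i * (Nat.choose (2 * k - 1 - i) i : ℤ)) * X ^ (k - 1 - i) ∧
      f k = ∑ j ∈ Finset.range (k + 1),
          C ((-1 : ℤ) ^ j * (Nat.choose (2 * k - j) j : ℤ)) * X ^ (k - j) := by
  intro k hk
  obtain ⟨k, rfl⟩ := Nat.exists_eq_add_of_le' hk
  have h := eq_diagonalChoosePoly_of_recursion f g hf0 hg0 hg hf
  rw [show 2 * (k + 1) - 1 = 2 * k + 1 by omega, Nat.add_sub_cancel]
  exact ⟨(h k).1, (h (k + 1)).2⟩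
end

section
/- Let (Q, n) be a metaplectic structure on a root datum with generalized Cartan matrix A = (a_{ij}), and set n_i = n/gcd(n, Q(aᵢ∨)). Then the matrix Ã with entries ã_{ij} = (n_i/n_j)·a_{ij} = (gcd(n,Q(aⱼ∨))/gcd(n,Q(aᵢ∨)))·a_{ij} is again a generalized Cartan matrix, i.e., ã_{ii} = 2, ã_{ij} ∈ ℤ_{≤0} for i ≠ j, and ã_{ij} = 0 iff ã_{ji} = 0. -/
/-!
Write `gᵢ = gcd(n, Qᵢ)`. The whole point is that `gᵢ ∣ gⱼ · aᵢⱼ`: by Bézout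
`gⱼ = n x + Qⱼ y`, so `gⱼ aᵢⱼ = n aᵢⱼ x + Qᵢ aⱼᵢ y` by invariance of `Q`, and `gᵢ` divides both
`n` and `Qᵢ`. Hence `ãᵢⱼ = gⱼ aᵢⱼ / gᵢ` is an integer, and dividing the entries of a generalized
Cartan matrix by positive weights on the left and multiplying by positive weights on the right
preserves the diagonal, the signs and the zero pattern.
-/

def IsGeneralizedCartanMatrix {I : Type*} (a : I → I → ℤ) : Prop :=
  (∀ i, a i i = 2) ∧ (∀ i j, i ≠ j → a i j ≤ 0) ∧ (∀ i j, a i j = 0 ↔ a j i = 0)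

theorem Int.gcd_dvd_gcd_mul_of_mul_eq_mul {n q q' b c : ℤ} (h : q * c = q' * b) :
    (Int.gcd n q : ℤ) ∣ Int.gcd n q' * b := by
  have hbezout : (Int.gcd n q' : ℤ) * b = n * (Int.gcdA n q' * b) + q * c * Int.gcdB n q' := by
    rw [Int.gcd_eq_gcd_ab, h]
    ring
  rw [hbezout]
  exact dvd_add (dvd_mul_of_dvd_left (Int.gcd_dvd_left n q))
    ((Int.gcd_dvd_right n q).mul_right _ |>.mul_right _)

namespace IsGeneralizedCartanMatrix

variable {I : Type*} {a : I → I → ℤ} {g : I → ℤ}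

theorem rescale (ha : IsGeneralizedCartanMatrix a) (hg : ∀ i, 0 < g i)
    (hdvd : ∀ i j, g i ∣ g j * a i j) :
    IsGeneralizedCartanMatrix (fun i j => g j * a i j / g i) := by
  obtain ⟨hdiag, hnonpos, hzero⟩ := ha
  have hzero_iff : ∀ i j, g j * a i j / g i = 0 ↔ a i j = 0 := fun i j => by
    constructor
    · intro h
      exact (mul_eq_zero.mp (Int.eq_zero_of_ediv_eq_zero (hdvd i j) h)).resolve_left
        (hg j).ne'
    · intro h
      simp [h]
  refine ⟨fun i => ?_, fun i j hij => ?_, fun i j => ?_⟩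
  · simp only [hdiag, Int.mul_ediv_cancel_left _ (hg i).ne']
  · exact Int.ediv_nonpos_of_nonpos_of_neg
      (mul_nonpos_of_nonneg_of_nonpos (hg j).le (hnonpos i j hij)) (hg i)
  · rw [hzero_iff, hzero_iff, hzero]

end IsGeneralizedCartanMatrix

theorem metaplectic_cartan_matrix_is_GCM_general {I : Type*} (a : I → I → ℤ) (Q : I → ℤ)
    (n : ℕ) (hn : 0 < n)
    (ha2 : ∀ i, a i i = 2)
    (haneg : ∀ i j, i ≠ j → a i j ≤ 0)
    (hzero : ∀ i j, a i j = 0 ↔ a j i = 0)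
    (hQ : ∀ i j, a i j ≠ 0 → Q i * a j i = Q j * a i j) :
    ∃ A' : I → I → ℤ,
      (∀ i j, (Int.gcd (n : ℤ) (Q i) : ℤ) * A' i j = (Int.gcd (n : ℤ) (Q j) : ℤ) * a i j) ∧
      (∀ i, A' i i = 2) ∧
      (∀ i j, i ≠ j → A' i j ≤ 0) ∧
      (∀ i j, A' i j = 0 ↔ A' j i = 0) := by
  set g : I → ℤ := fun i => (Int.gcd (n : ℤ) (Q i) : ℤ)
  have hg : ∀ i, 0 < g i := fun i =>
    Int.natCast_pos.mpr (Int.gcd_pos_of_ne_zero_left (Q i) (Int.natCast_ne_zero.mpr hn.ne'))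
  have hdvd : ∀ i j, g i ∣ g j * a i j := fun i j => by
    by_cases hij : a i j = 0
    · simp [hij]
    · exact Int.gcd_dvd_gcd_mul_of_mul_eq_mul (hQ i j hij)
  exact ⟨fun i j => g j * a i j / g i, fun i j => Int.mul_ediv_cancel' (hdvd i j),
    IsGeneralizedCartanMatrix.rescale ⟨ha2, haneg, hzero⟩ hg hdvd⟩

/-- Metaplectic Cartan matrix: given a generalized Cartan matrix `A = (a i j)`, a positive
`W`-invariant integral quadratic form `Q` on the coroot lattice (recorded by its values
`Q i = Q(aᵢ∨)`, invariance giving `Qᵢ·aⱼᵢ = Qⱼ·aᵢⱼ` whenever `aᵢⱼ ≠ 0`) and a positive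
integer `n`, the matrix `Ã` with `ã i j = (gcd(n, Q j)/gcd(n, Q i))·a i j`
(equivalently `gcd(n, Qᵢ)·ã i j = gcd(n, Qⱼ)·a i j`, and these quotients are integers)
is again a generalized Cartan matrix: `ã i i = 2`, `ã i j ≤ 0` for `i ≠ j`, and
`ã i j = 0 ↔ ã j i = 0`. -/
theorem metaplectic_cartan_matrix_is_GCM {I : Type*} (a : I → I → ℤ) (Q : I → ℤ)
    (n : ℕ) (hn : 0 < n)
    (ha2 : ∀ i, a i i = 2)
    (haneg : ∀ i j, i ≠ j → a i j ≤ 0)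
    (hzero : ∀ i j, a i j = 0 ↔ a j i = 0)
    (hQpos : ∀ i, 0 < Q i)
    (hQ : ∀ i j, a i j ≠ 0 → Q i * a j i = Q j * a i j) :
    ∃ A' : I → I → ℤ,
      (∀ i j, (Int.gcd (n : ℤ) (Q i) : ℤ) * A' i j = (Int.gcd (n : ℤ) (Q j) : ℤ) * a i j) ∧
      (∀ i, A' i i = 2) ∧
      (∀ i j, i ≠ j → A' i j ≤ 0) ∧
      (∀ i j, A' i j = 0 ↔ A' j i = 0) :=
  metaplectic_cartan_matrix_is_GCM_general a Q n hn ha2 haneg hzero hQ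
end

section
/- Let W be the Weyl group of a symmetrizable Kac-Moody root system and suppose w ∈ W satisfies w(a) = a and w(b) = ±b for both simple roots a,b of a rank-2 subsystem with f_k(z) = -f_{k-1}(z) for v = (s_a s_b)^k (as in the paper's proof): if for some k > 0 one has g_k(z) = 0 with z = mn ≠ 0 (m,n the off-diagonal Cartan entries), then (s_a s_b) has finite order in W dividing 2k, and hence z = mn ≤ 3, so the rank-2 system is of finite type (A₂, B₂ or G₂). -/
/-!
Put `z = m n`. The matrix of `s_a s_b` has determinant `1`, and its powers have entries
`f_j, g_j`; so `g_k = 0` makes `(s_a s_b)^k` the scalar `f_k`, and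
the determinant identity `f_j² - z f_j g_j + z g_j² = 1` forces `f_k = ±1`, whence
`(s_a s_b)^{2k} = 1`. Eliminating `f` gives `g_{j+2} = (z - 2) g_{j+1} - g_j` with
`g_0 = 0`, `g_1 = 1`; for `z ≥ 4` the differences `g_{j+1} - g_j` never decrease, so
`g_j ≥ j` and `g` has no zero at `k > 0`. Hence `z ≤ 3`.
-/

/-- The simple reflection `s_a` on the rank-2 root lattice `ℤa ⊕ ℤb` (coordinates `(p,q)`
for `p·a + q·b`), where `m = ⟨b, a∨⟩`. -/
def sA (m : ℤ) : AddMonoid.End (ℤ × ℤ) :=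
  AddMonoidHom.mk' (fun v => (-(v.1 + m * v.2), v.2)) (by
    intro x y
    simp [Prod.ext_iff]
    ring)

/-- The simple reflection `s_b` on `ℤa ⊕ ℤb`, where `n = ⟨a, b∨⟩`. -/
def sB (n : ℤ) : AddMonoid.End (ℤ × ℤ) :=
  AddMonoidHom.mk' (fun v => (v.1, -(n * v.1 + v.2))) (by
    intro x y
    simp [Prod.ext_iff]
    ring)

theorem sA_mul_sB_apply (m n : ℤ) (v : ℤ × ℤ) :
    (sA m * sB n) v = (-(v.1 + m * -(n * v.1 + v.2)), -(n * v.1 + v.2)) :=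
  rfl

/-- `f j = f_j(z)` and `g j = g_j(z)` for the polynomials `f_j, g_j` of the recursion. -/
structure IsFGRecursion (z : ℤ) (f g : ℕ → ℤ) : Prop where
  f_zero : f 0 = 1
  g_zero : g 0 = 0
  g_succ : ∀ k, g (k + 1) = f k - g k
  f_succ : ∀ k, f (k + 1) = z * g (k + 1) - f k

namespace IsFGRecursion

variable {z : ℤ} {f g : ℕ → ℤ}

theorem g_one (h : IsFGRecursion z f g) : g 1 = 1 := by
  rw [h.g_succ, h.f_zero, h.g_zero, sub_zero]

theorem g_add_two (h : IsFGRecursion z f g) (j : ℕ) :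
    g (j + 2) = (z - 2) * g (j + 1) - g j := by
  rw [h.g_succ (j + 1), h.f_succ, h.g_succ j]
  ring

theorem f_sq_sub_add_g_sq (h : IsFGRecursion z f g) (j : ℕ) :
    f j ^ 2 - z * g j * f j + z * g j ^ 2 = 1 := by
  induction j with
  | zero => rw [h.f_zero, h.g_zero]; ring
  | succ i ih => rw [h.f_succ, h.g_succ]; linear_combination ih

theorem sq_f_eq_one_of_g_eq_zero (h : IsFGRecursion z f g) {k : ℕ} (hgk : g k = 0) :
    f k ^ 2 = 1 := by
  simpa [hgk] using h.f_sq_sub_add_g_sq k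

theorem le_g_of_four_le (h : IsFGRecursion z f g) (hz : 4 ≤ z) (j : ℕ) : (j : ℤ) ≤ g j := by
  have key : ∀ i : ℕ, (i : ℤ) ≤ g i ∧ g i + 1 ≤ g (i + 1) := by
    intro i
    induction i with
    | zero => simp [h.g_zero, h.g_one]
    | succ i ih =>
      have hgi : 0 ≤ g (i + 1) := by omega
      refine ⟨by push_cast; omega, ?_⟩
      rw [h.g_add_two]
      nlinarith
  exact (key j).1

theorem le_three_of_g_eq_zero (h : IsFGRecursion z f g) {k : ℕ} (hk : 0 < k) (hgk : g k = 0) :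
    z ≤ 3 := by
  by_contra! hz
  have := h.le_g_of_four_le (by omega) k
  omega

variable {m n : ℤ}

theorem sA_mul_sB_pow_apply (h : IsFGRecursion (m * n) f g) (j : ℕ) (v : ℤ × ℤ) :
    ((sA m * sB n) ^ j) v =
      (f j * v.1 + m * g j * v.2, -(n * g j * v.1) + (f j - m * n * g j) * v.2) := by
  induction j with
  | zero => simp [h.f_zero, h.g_zero]
  | succ i ih =>
    rw [pow_succ', AddMonoid.End.coe_mul, Function.comp_apply, ih, sA_mul_sB_apply, h.f_succ,
      h.g_succ]
    ext <;> ring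

theorem sA_mul_sB_pow_apply_of_g_eq_zero (h : IsFGRecursion (m * n) f g) {k : ℕ}
    (hgk : g k = 0) (v : ℤ × ℤ) : ((sA m * sB n) ^ k) v = f k • v := by
  rw [h.sA_mul_sB_pow_apply, hgk]
  ext <;> simp

theorem sA_mul_sB_pow_two_mul_eq_one (h : IsFGRecursion (m * n) f g) {k : ℕ}
    (hgk : g k = 0) : (sA m * sB n) ^ (2 * k) = 1 := by
  refine DFunLike.ext _ _ fun v => ?_
  rw [mul_comm, pow_mul, sq, AddMonoid.End.coe_mul, Function.comp_apply,
    h.sA_mul_sB_pow_apply_of_g_eq_zero hgk, h.sA_mul_sB_pow_apply_of_g_eq_zero hgk, smul_smul, ← sq, h.sq_f_eq_one_of_g_eq_zero hgk,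
    one_smul, AddMonoid.End.one_apply]

end IsFGRecursion

/-- In the rank-2 setting with off-diagonal Cartan entries `m, n ≤ 0` and `z = m·n ≠ 0`:
if `g_k(z) = 0` for some `k > 0` (where `f, g` satisfy the standard recursion evaluated
at `z = m·n`), then `s_a s_b` has finite order dividing `2k` and `z = m·n ≤ 3`, so the
rank-2 root system is of finite type (`A₂`, `B₂` or `G₂`). -/
theorem rank_two_finite_order_of_g_eq_zero (m n : ℤ) (hm : m ≤ 0) (hn : n ≤ 0)
    (hz : m * n ≠ 0) (f g : ℕ → ℤ)
    (hf0 : f 0 = 1) (hg0 : g 0 = 0)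
    (hgrec : ∀ k, g (k + 1) = f k - g k)
    (hfrec : ∀ k, f (k + 1) = (m * n) * g (k + 1) - f k)
    (k : ℕ) (hk : 0 < k) (hgk : g k = 0) :
    (sA m * sB n) ^ (2 * k) = 1 ∧ 1 ≤ m * n ∧ m * n ≤ 3 := by
  have h : IsFGRecursion (m * n) f g := ⟨hf0, hg0, hgrec, hfrec⟩
  have hpos : 0 < m * n := (mul_nonneg_of_nonpos_of_nonpos hm hn).lt_of_ne' hz
  exact ⟨h.sA_mul_sB_pow_two_mul_eq_one hgk, hpos, h.le_three_of_g_eq_zero hk hgk⟩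
end
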